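/- arXiv:1411.3716 — 7 statements merged into one kernel-verified Lean document; each statement's English description precedes it below -/
import Mathlib

section
/- Suppose P_1* maximizes g(P_1) := ∑_{i=1}^{K+1} C(A·P_1^i/N_0)·l^i over all P_1 with P_1^i ≥ 0 and ∑_{i=1}^k P_1^i l^i ≤ ∑_{i=0}^{k-1} E_1^i for all k = 1,…,K+1, and suppose the greedy relay allocation P_2*^i := ((A−1)/b²)·P_1*^i satisfies the relay energy causality ∑_{i=1}^k P_2*^i l^i ≤ ∑_{i=0}^{k-1} E_2^i for all k. Then (P_1*, P_2*) ∈ D and (P_1*, P_2*) maximizes F(P_1,P_2) over D, i.e., F(P_1*,P_2*) = sup_{(P_1,P_2) ∈ D} F(P_1,P_2). -/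
/-- `C(x) = log₂(1+x)`. -/
noncomputable def Cfun (x : ℝ) : ℝ := Real.logb 2 (1 + x)

/-- `A = max(1, a²)`. -/
noncomputable def Aval (a : ℝ) : ℝ := max 1 (a ^ 2)

/-- The full-duplex noncoherent DF throughput
`F(P₁,P₂) = ∑_{i=1}^{K+1} min{ C((P₁ⁱ+b²P₂ⁱ)/N₀), C(A·P₁ⁱ/N₀) }·lⁱ`
(epochs indexed `0,…,K`). -/
noncomputable def Fthr (K : ℕ) (l : ℕ → ℝ) (N0 a b : ℝ) (P1 P2 : ℕ → ℝ) : ℝ :=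
  ∑ i ∈ Finset.range (K + 1),
    min (Cfun ((P1 i + b ^ 2 * P2 i) / N0)) (Cfun (Aval a * P1 i / N0)) * l i

/-- The no-ET feasible set `D`: nonnegative powers and energy causality at S and R. -/
def InD (K : ℕ) (l E1 E2 : ℕ → ℝ) (P1 P2 : ℕ → ℝ) : Prop :=
  (∀ i ∈ Finset.range (K + 1), 0 ≤ P1 i ∧ 0 ≤ P2 i) ∧
  (∀ k, 1 ≤ k → k ≤ K + 1 →
    ∑ i ∈ Finset.range k, P1 i * l i ≤ ∑ i ∈ Finset.range k, E1 i) ∧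
  (∀ k, 1 ≤ k → k ≤ K + 1 →
    ∑ i ∈ Finset.range k, P2 i * l i ≤ ∑ i ∈ Finset.range k, E2 i)

/-- The total-power feasible set `T` for total energies `Et`. -/
def InT (K : ℕ) (l Et : ℕ → ℝ) (Pt : ℕ → ℝ) : Prop :=
  (∀ i ∈ Finset.range (K + 1), 0 ≤ Pt i) ∧
  (∀ k, 1 ≤ k → k ≤ K + 1 →
    ∑ i ∈ Finset.range k, Pt i * l i ≤ ∑ i ∈ Finset.range k, Et i)

/-- Lemma 1: if `P₁*` maximizes the S–R rate sum over the source-feasible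
set and the greedy relay allocation `P₂*ⁱ = ((A−1)/b²)·P₁*ⁱ` is relay-feasible, then
`(P₁*,P₂*)` is feasible and maximizes `F` over `D`. -/
theorem stmt_2 (K : ℕ) (l E1 E2 : ℕ → ℝ) (N0 a b : ℝ)
    (hl : ∀ i ∈ Finset.range (K + 1), 0 < l i)
    (hE1 : ∀ i ∈ Finset.range (K + 1), 0 ≤ E1 i)
    (hE2 : ∀ i ∈ Finset.range (K + 1), 0 ≤ E2 i)
    (hN0 : 0 < N0) (hb : b ≠ 0)
    (P1s P2s : ℕ → ℝ)
    (hP1nonneg : ∀ i ∈ Finset.range (K + 1), 0 ≤ P1s i)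
    (hP1feas : ∀ k, 1 ≤ k → k ≤ K + 1 →
      ∑ i ∈ Finset.range k, P1s i * l i ≤ ∑ i ∈ Finset.range k, E1 i)
    (hP1opt : ∀ Q1 : ℕ → ℝ, (∀ i ∈ Finset.range (K + 1), 0 ≤ Q1 i) →
      (∀ k, 1 ≤ k → k ≤ K + 1 →
        ∑ i ∈ Finset.range k, Q1 i * l i ≤ ∑ i ∈ Finset.range k, E1 i) →
      ∑ i ∈ Finset.range (K + 1), Cfun (Aval a * Q1 i / N0) * l i ≤
        ∑ i ∈ Finset.range (K + 1), Cfun (Aval a * P1s i / N0) * l i)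
    (hP2def : ∀ i, P2s i = (Aval a - 1) / b ^ 2 * P1s i)
    (hP2feas : ∀ k, 1 ≤ k → k ≤ K + 1 →
      ∑ i ∈ Finset.range k, P2s i * l i ≤ ∑ i ∈ Finset.range k, E2 i) :
    InD K l E1 E2 P1s P2s ∧
    IsGreatest {y : ℝ | ∃ P1 P2 : ℕ → ℝ, InD K l E1 E2 P1 P2 ∧ y = Fthr K l N0 a b P1 P2}
      (Fthr K l N0 a b P1s P2s) := by
  have hb2 : (0:ℝ) < b ^ 2 := by positivity
  have hA1 : (1:ℝ) ≤ Aval a := le_max_left _ _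
  have hP2nonneg : ∀ i ∈ Finset.range (K + 1), 0 ≤ P2s i := by
    intro i hi
    rw [hP2def i]
    have := hP1nonneg i hi
    have : 0 ≤ (Aval a - 1) / b ^ 2 := by
      apply div_nonneg (by linarith) hb2.le
    positivity
  have hInD : InD K l E1 E2 P1s P2s :=
    ⟨fun i hi => ⟨hP1nonneg i hi, hP2nonneg i hi⟩, hP1feas, hP2feas⟩
  have hFeq : Fthr K l N0 a b P1s P2s =
      ∑ i ∈ Finset.range (K + 1), Cfun (Aval a * P1s i / N0) * l i := by
    apply Finset.sum_congr rfl
    intro i hi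
    have : P1s i + b ^ 2 * P2s i = Aval a * P1s i := by
      rw [hP2def i]; field_simp; ring
    rw [this, min_self]
  refine ⟨hInD, ⟨P1s, P2s, hInD, rfl⟩, ?_⟩
  rintro y ⟨P1, P2, ⟨hnn, hf1, hf2⟩, rfl⟩
  rw [hFeq]
  calc Fthr K l N0 a b P1 P2
      ≤ ∑ i ∈ Finset.range (K + 1), Cfun (Aval a * P1 i / N0) * l i := by
        apply Finset.sum_le_sum
        intro i hi
        exact mul_le_mul_of_nonneg_right (min_le_right _ _) (hl i hi).le
    _ ≤ _ := hP1opt P1 (fun i hi => (hnn i hi).1) hf1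
end

section
/- If (P_1, P_2) satisfies A·P_1^i ≤ P_1^i + b²·P_2^i for every i = 1,…,K+1, then F(P_1, P_2) = ∑_{i=1}^{K+1} C(A·P_1^i/N_0)·l^i; consequently, if such a pair (P_1, P_2) ∈ D maximizes F over D and (P_1, P_2') ∈ D satisfies P_2'^i ≥ P_2^i for all i, then (P_1, P_2') also maximizes F over D. In particular, the optimal power allocation for the no-ET problem is not necessarily unique. -/
lemma Cfun_le_Cfun {x y : ℝ} (hx : -1 < x) (hxy : x ≤ y) : Cfun x ≤ Cfun y :=
  Real.logb_le_logb_of_le one_lt_two (by linarith) (by linarith)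

lemma Aval_nonneg (a : ℝ) : 0 ≤ Aval a :=
  zero_le_one.trans (le_max_left _ _)

lemma Fthr_eq_sum_Cfun_of_forall_le {K : ℕ} {l : ℕ → ℝ} {N0 a b : ℝ} {P1 P2 : ℕ → ℝ}
    (hN0 : 0 < N0) (hP1 : ∀ i ∈ Finset.range (K + 1), 0 ≤ P1 i)
    (hrelay : ∀ i ∈ Finset.range (K + 1), Aval a * P1 i ≤ P1 i + b ^ 2 * P2 i) :
    Fthr K l N0 a b P1 P2 = ∑ i ∈ Finset.range (K + 1), Cfun (Aval a * P1 i / N0) * l i := by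
  refine Finset.sum_congr rfl fun i hi => ?_
  have hsr : 0 ≤ Aval a * P1 i / N0 := by
    have := Aval_nonneg a
    have := hP1 i hi
    positivity
  rw [min_eq_right (Cfun_le_Cfun (by linarith) (div_le_div_of_nonneg_right (hrelay i hi) hN0.le))]

lemma mul_le_add_sq_mul_of_le {A P1 P2 P2' b : ℝ} (h : A * P1 ≤ P1 + b ^ 2 * P2) (hP2 : P2 ≤ P2') :
    A * P1 ≤ P1 + b ^ 2 * P2' := by
  nlinarith [sq_nonneg b]

theorem stmt_3_general (K : ℕ) (l E1 E2 : ℕ → ℝ) (N0 a b : ℝ)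
    (hN0 : 0 < N0) :
    (∀ P1 P2 : ℕ → ℝ, InD K l E1 E2 P1 P2 →
      (∀ i ∈ Finset.range (K + 1), Aval a * P1 i ≤ P1 i + b ^ 2 * P2 i) →
      Fthr K l N0 a b P1 P2 =
        ∑ i ∈ Finset.range (K + 1), Cfun (Aval a * P1 i / N0) * l i) ∧
    (∀ P1 P2 P2' : ℕ → ℝ,
      (∀ i ∈ Finset.range (K + 1), Aval a * P1 i ≤ P1 i + b ^ 2 * P2 i) →
      InD K l E1 E2 P1 P2 →
      IsGreatest {y : ℝ | ∃ Q1 Q2 : ℕ → ℝ, InD K l E1 E2 Q1 Q2 ∧ y = Fthr K l N0 a b Q1 Q2}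
        (Fthr K l N0 a b P1 P2) →
      InD K l E1 E2 P1 P2' →
      (∀ i ∈ Finset.range (K + 1), P2 i ≤ P2' i) →
      IsGreatest {y : ℝ | ∃ Q1 Q2 : ℕ → ℝ, InD K l E1 E2 Q1 Q2 ∧ y = Fthr K l N0 a b Q1 Q2}
        (Fthr K l N0 a b P1 P2')) := by
  refine ⟨fun P1 P2 hD hrelay =>
    Fthr_eq_sum_Cfun_of_forall_le hN0 (fun i hi => (hD.1 i hi).1) hrelay, ?_⟩
  intro P1 P2 P2' hrelay hD hmax hD' hP2
  have hrelay' : ∀ i ∈ Finset.range (K + 1), Aval a * P1 i ≤ P1 i + b ^ 2 * P2' i :=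
    fun i hi => mul_le_add_sq_mul_of_le (hrelay i hi) (hP2 i hi)
  have hsame : Fthr K l N0 a b P1 P2' = Fthr K l N0 a b P1 P2 := by
    rw [Fthr_eq_sum_Cfun_of_forall_le hN0 (fun i hi => (hD'.1 i hi).1) hrelay',
      Fthr_eq_sum_Cfun_of_forall_le hN0 (fun i hi => (hD.1 i hi).1) hrelay]
  rw [hsame]
  exact ⟨⟨P1, P2', hD', hsame.symm⟩, hmax.2⟩

/-- Lemma 2: if `A·P₁ⁱ ≤ P₁ⁱ + b²P₂ⁱ` for all `i` then `F` reduces to the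
S–R rate sum; consequently enlarging the relay powers of such an optimal pair (staying in
`D`) preserves optimality — the optimal allocation is not necessarily unique. -/
theorem stmt_3 (K : ℕ) (l E1 E2 : ℕ → ℝ) (N0 a b : ℝ)
    (hl : ∀ i ∈ Finset.range (K + 1), 0 < l i)
    (hE1 : ∀ i ∈ Finset.range (K + 1), 0 ≤ E1 i)
    (hE2 : ∀ i ∈ Finset.range (K + 1), 0 ≤ E2 i)
    (hN0 : 0 < N0) (hb : b ≠ 0) :
    (∀ P1 P2 : ℕ → ℝ, InD K l E1 E2 P1 P2 →
      (∀ i ∈ Finset.range (K + 1), Aval a * P1 i ≤ P1 i + b ^ 2 * P2 i) →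
      Fthr K l N0 a b P1 P2 =
        ∑ i ∈ Finset.range (K + 1), Cfun (Aval a * P1 i / N0) * l i) ∧
    (∀ P1 P2 P2' : ℕ → ℝ,
      (∀ i ∈ Finset.range (K + 1), Aval a * P1 i ≤ P1 i + b ^ 2 * P2 i) →
      InD K l E1 E2 P1 P2 →
      IsGreatest {y : ℝ | ∃ Q1 Q2 : ℕ → ℝ, InD K l E1 E2 Q1 Q2 ∧ y = Fthr K l N0 a b Q1 Q2}
        (Fthr K l N0 a b P1 P2) →
      InD K l E1 E2 P1 P2' →
      (∀ i ∈ Finset.range (K + 1), P2 i ≤ P2' i) →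
      IsGreatest {y : ℝ | ∃ Q1 Q2 : ℕ → ℝ, InD K l E1 E2 Q1 Q2 ∧ y = Fthr K l N0 a b Q1 Q2}
        (Fthr K l N0 a b P1 P2')) :=
  stmt_3_general K l E1 E2 N0 a b hN0
end

section
/- Let l^i > 0 (i = 1,…,K+1), let E_1^i ≥ 0 and Ẽ_2^i ≥ 0 (i = 0,…,K), and let P_1^i ≥ 0 and P̃_2^i ≥ 0 (i = 1,…,K+1). Then the following are equivalent: (a) there exist δ_1^0,…,δ_1^K ≥ 0 and δ_2^0,…,δ_2^K ≥ 0 with δ_1^i·δ_2^i = 0 for every i, such that for every k = 1,…,K+1, ∑_{i=1}^k P_1^i l^i ≤ ∑_{i=0}^{k-1}(E_1^i − δ_1^i + δ_2^i) and ∑_{i=1}^k P̃_2^i l^i ≤ ∑_{i=0}^{k-1}(Ẽ_2^i − δ_2^i + δ_1^i); (b) for every k = 1,…,K+1, ∑_{i=1}^k (P_1^i + P̃_2^i) l^i ≤ ∑_{i=0}^{k-1}(E_1^i + Ẽ_2^i). -/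
/-- Lemma 7: the two-way energy-transfer constraints (existence of
half-duplex transfers `δ₁, δ₂ ≥ 0` with `δ₁ⁱ·δ₂ⁱ = 0`) are equivalent to a single
total-energy causality constraint.  Epochs are indexed `0,…,K`. -/
theorem stmt_5 (K : ℕ) (l E1 E2t P1 P2t : ℕ → ℝ)
    (hl : ∀ i ∈ Finset.range (K + 1), 0 < l i)
    (hE1 : ∀ i ∈ Finset.range (K + 1), 0 ≤ E1 i)
    (hE2 : ∀ i ∈ Finset.range (K + 1), 0 ≤ E2t i)
    (hP1 : ∀ i ∈ Finset.range (K + 1), 0 ≤ P1 i)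
    (hP2 : ∀ i ∈ Finset.range (K + 1), 0 ≤ P2t i) :
    (∃ δ1 δ2 : ℕ → ℝ,
      (∀ i ∈ Finset.range (K + 1), 0 ≤ δ1 i ∧ 0 ≤ δ2 i ∧ δ1 i * δ2 i = 0) ∧
      (∀ k, 1 ≤ k → k ≤ K + 1 →
        ∑ i ∈ Finset.range k, P1 i * l i ≤
          ∑ i ∈ Finset.range k, (E1 i - δ1 i + δ2 i)) ∧
      (∀ k, 1 ≤ k → k ≤ K + 1 →
        ∑ i ∈ Finset.range k, P2t i * l i ≤
          ∑ i ∈ Finset.range k, (E2t i - δ2 i + δ1 i))) ↔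
    (∀ k, 1 ≤ k → k ≤ K + 1 →
      ∑ i ∈ Finset.range k, (P1 i + P2t i) * l i ≤
        ∑ i ∈ Finset.range k, (E1 i + E2t i)) := by
  constructor
  · rintro ⟨δ1, δ2, _, h1, h2⟩ k hk1 hk2
    have h := add_le_add (h1 k hk1 hk2) (h2 k hk1 hk2)
    rw [← Finset.sum_add_distrib, ← Finset.sum_add_distrib] at h
    calc ∑ i ∈ Finset.range k, (P1 i + P2t i) * l i
        = ∑ i ∈ Finset.range k, (P1 i * l i + P2t i * l i) := by
          apply Finset.sum_congr rfl; intros; ring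
      _ ≤ ∑ i ∈ Finset.range k, (E1 i - δ1 i + δ2 i + (E2t i - δ2 i + δ1 i)) := h
      _ = ∑ i ∈ Finset.range k, (E1 i + E2t i) := by
          apply Finset.sum_congr rfl; intros; ring
  · intro h
    refine ⟨fun i => max (E1 i - P1 i * l i) 0, fun i => max (P1 i * l i - E1 i) 0,
      ?_, ?_, ?_⟩
    · intro i _
      refine ⟨le_max_right _ _, le_max_right _ _, ?_⟩
      beta_reduce
      rcases le_total (E1 i - P1 i * l i) 0 with h' | h'
      · rw [max_eq_right h', zero_mul]
      · have h'' : P1 i * l i - E1 i ≤ 0 := by linarith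
        rw [max_eq_right h'', mul_zero]
    · intro k hk1 hk2
      refine le_of_eq (Finset.sum_congr rfl fun i _ => ?_).symm
      beta_reduce
      rcases le_total (E1 i - P1 i * l i) 0 with h' | h'
      · have h'' : 0 ≤ P1 i * l i - E1 i := by linarith
        rw [max_eq_right h', max_eq_left h'']; ring
      · have h'' : P1 i * l i - E1 i ≤ 0 := by linarith
        rw [max_eq_left h', max_eq_right h'']; ring
    · intro k hk1 hk2
      beta_reduce
      have heq : ∑ i ∈ Finset.range k, (E2t i - max (P1 i * l i - E1 i) 0
          + max (E1 i - P1 i * l i) 0)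
          = ∑ i ∈ Finset.range k, (E1 i + E2t i - P1 i * l i) := by
        apply Finset.sum_congr rfl; intro i _
        rcases le_total (E1 i - P1 i * l i) 0 with h' | h'
        · have h'' : 0 ≤ P1 i * l i - E1 i := by linarith
          rw [max_eq_right h', max_eq_left h'']; ring
        · have h'' : P1 i * l i - E1 i ≤ 0 := by linarith
          rw [max_eq_left h', max_eq_right h'']; ring
      rw [heq]
      have hh := h k hk1 hk2
      have e1 : ∑ i ∈ Finset.range k, (P1 i + P2t i) * l i
          = ∑ i ∈ Finset.range k, P1 i * l i + ∑ i ∈ Finset.range k, P2t i * l i := by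
        rw [← Finset.sum_add_distrib]; apply Finset.sum_congr rfl; intros; ring
      have e2 : ∑ i ∈ Finset.range k, (E1 i + E2t i - P1 i * l i)
          = ∑ i ∈ Finset.range k, (E1 i + E2t i) - ∑ i ∈ Finset.range k, P1 i * l i := by
        rw [← Finset.sum_sub_distrib]
      linarith
end

section
/- Let D₂ be the two-way ET feasible set: all (P_1, P_2, δ_1, δ_2) with P_1^i, P_2^i ≥ 0 (i = 1,…,K+1), δ_1^i, δ_2^i ≥ 0 and δ_1^i·δ_2^i = 0 (i = 0,…,K), such that for all k = 1,…,K+1, ∑_{i=1}^k P_1^i l^i ≤ ∑_{i=0}^{k-1}(E_1^i − δ_1^i + δ_2^i) and ∑_{i=1}^k b²P_2^i l^i ≤ ∑_{i=0}^{k-1}(b²E_2^i − δ_2^i + δ_1^i). Then sup_{(P_1,P_2,δ_1,δ_2) ∈ D₂} F(P_1, P_2) = sup_{P̃_t ∈ T} ∑_{i=1}^{K+1} C(P̃_t^i/N_0)·l^i. Moreover, if P̃_t* attains the right-hand supremum, then with P_1*^i := P̃_t*^i/A and P_2*^i := (A−1)·P̃_t*^i/(A·b²) there exist δ_1*, δ_2*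 ≥ 0 with δ_1*^i·δ_2*^i = 0 such that (P_1*, P_2*, δ_1*, δ_2*) ∈ D₂ and F(P_1*, P_2*) equals the common supremum. -/
/-- The two-way ET feasible set `D₂`: nonnegative powers, nonnegative half-duplex
transfers, and energy causality at S and R with transfers. -/
def InD2 (K : ℕ) (l E1 E2 : ℕ → ℝ) (b : ℝ) (P1 P2 δ1 δ2 : ℕ → ℝ) : Prop :=
  (∀ i ∈ Finset.range (K + 1), 0 ≤ P1 i ∧ 0 ≤ P2 i) ∧
  (∀ i ∈ Finset.range (K + 1), 0 ≤ δ1 i ∧ 0 ≤ δ2 i ∧ δ1 i * δ2 i = 0) ∧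
  (∀ k, 1 ≤ k → k ≤ K + 1 →
    ∑ i ∈ Finset.range k, P1 i * l i ≤
      ∑ i ∈ Finset.range k, (E1 i - δ1 i + δ2 i)) ∧
  (∀ k, 1 ≤ k → k ≤ K + 1 →
    ∑ i ∈ Finset.range k, b ^ 2 * P2 i * l i ≤
      ∑ i ∈ Finset.range k, (b ^ 2 * E2 i - δ2 i + δ1 i))

/-! Summing the two causality constraints of `D₂` cancels the transfers, so `P₁ + b²P₂` is
feasible for the total-energy problem, and `F(P₁,P₂) ≤ ∑ C((P₁ⁱ + b²P₂ⁱ)/N₀)·lⁱ`. Conversely,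
if `P₁ + b²P₂ ∈ T`, letting S hand its per-epoch surplus `E₁ⁱ − P₁ⁱlⁱ` to R (or take its deficit
from R) makes `(P₁, P₂)` feasible in `D₂`. The split `P₁ = P̃/A`, `P₂ = (A−1)P̃/(Ab²)` makes both
arguments of the `min` in `F` equal to `P̃`, so it attains the total-energy objective. -/

open Finset

theorem negPart_mul_posPart_eq_zero {α : Type*} [Ring α] [LinearOrder α] [IsOrderedRing α]
    (x : α) : x⁻ * x⁺ = 0 := by
  rcases le_total x 0 with h | h
  · rw [posPart_eq_zero.2 h, mul_zero]
  · rw [negPart_eq_zero.2 h, zero_mul]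

section TwoWayTransfer

variable {K : ℕ} {l E1 E2 : ℕ → ℝ} {b : ℝ} {P1 P2 : ℕ → ℝ}

theorem InD2.inT_add {δ1 δ2 : ℕ → ℝ} (h : InD2 K l E1 E2 b P1 P2 δ1 δ2) :
    InT K l (fun i => E1 i + b ^ 2 * E2 i) (fun i => P1 i + b ^ 2 * P2 i) := by
  obtain ⟨hP, -, hS, hR⟩ := h
  refine ⟨fun i hi => add_nonneg (hP i hi).1 (mul_nonneg (sq_nonneg b) (hP i hi).2),
    fun k hk1 hk2 => ?_⟩
  have h := add_le_add (hS k hk1 hk2) (hR k hk1 hk2)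
  simp only [← sum_add_distrib] at h
  exact le_of_eq_of_le (sum_congr rfl fun i _ => by ring)
    (h.trans_eq (sum_congr rfl fun i _ => by ring))

theorem inD2_of_inT_add (hP : ∀ i ∈ range (K + 1), 0 ≤ P1 i ∧ 0 ≤ P2 i)
    (hT : InT K l (fun i => E1 i + b ^ 2 * E2 i) (fun i => P1 i + b ^ 2 * P2 i)) :
    InD2 K l E1 E2 b P1 P2 (fun i => (P1 i * l i - E1 i)⁻) (fun i => (P1 i * l i - E1 i)⁺) := by
  have hnet (i : ℕ) : (P1 i * l i - E1 i)⁺ - (P1 i * l i - E1 i)⁻ = P1 i * l i - E1 i :=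
    posPart_sub_negPart _
  refine ⟨hP, fun i _ => ⟨negPart_nonneg _, posPart_nonneg _, negPart_mul_posPart_eq_zero _⟩,
    fun k _ _ => (sum_congr rfl fun i _ => by linarith [hnet i]).le, fun k hk1 hk2 => ?_⟩
  calc ∑ i ∈ range k, b ^ 2 * P2 i * l i
      = ∑ i ∈ range k, (P1 i + b ^ 2 * P2 i) * l i - ∑ i ∈ range k, P1 i * l i := by
        rw [← sum_sub_distrib]; exact sum_congr rfl fun i _ => by ring
    _ ≤ ∑ i ∈ range k, (E1 i + b ^ 2 * E2 i) - ∑ i ∈ range k, P1 i * l i :=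
        sub_le_sub_right (hT.2 k hk1 hk2) _
    _ = _ := by
        rw [← sum_sub_distrib]; exact sum_congr rfl fun i _ => by linarith [hnet i]

end TwoWayTransfer

section Throughput

variable {K : ℕ} {l : ℕ → ℝ} {N0 a b : ℝ}

theorem one_le_aval (a : ℝ) : 1 ≤ Aval a := le_max_left _ _

theorem Fthr_le_sum_cfun_add {P1 P2 : ℕ → ℝ} (hl : ∀ i ∈ range (K + 1), 0 ≤ l i) :
    Fthr K l N0 a b P1 P2 ≤ ∑ i ∈ range (K + 1), Cfun ((P1 i + b ^ 2 * P2 i) / N0) * l i :=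
  sum_le_sum fun i hi => mul_le_mul_of_nonneg_right (min_le_left _ _) (hl i hi)

variable (a) in
theorem split_add (hb : b ≠ 0) (x : ℝ) :
    x / Aval a + b ^ 2 * ((Aval a - 1) * x / (Aval a * b ^ 2)) = x := by
  have := (zero_lt_one.trans_le (one_le_aval a)).ne'
  field_simp
  ring

theorem split_nonneg {x : ℝ} (hx : 0 ≤ x) :
    0 ≤ x / Aval a ∧ 0 ≤ (Aval a - 1) * x / (Aval a * b ^ 2) := by
  have := one_le_aval a
  exact ⟨by positivity, div_nonneg (mul_nonneg (by linarith) hx) (by positivity)⟩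

theorem Fthr_split (hb : b ≠ 0) (Pt : ℕ → ℝ) :
    Fthr K l N0 a b (fun i => Pt i / Aval a) (fun i => (Aval a - 1) * Pt i / (Aval a * b ^ 2)) =
      ∑ i ∈ range (K + 1), Cfun (Pt i / N0) * l i := by
  have hA := (zero_lt_one.trans_le (one_le_aval a)).ne'
  refine sum_congr rfl fun i _ => ?_
  rw [split_add a hb, mul_div_cancel₀ _ hA, min_self]

theorem inD2_split {E1 E2 Pt : ℕ → ℝ} (hb : b ≠ 0)
    (hPt : InT K l (fun i => E1 i + b ^ 2 * E2 i) Pt) :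
    ∃ δ1 δ2 : ℕ → ℝ, InD2 K l E1 E2 b (fun i => Pt i / Aval a)
      (fun i => (Aval a - 1) * Pt i / (Aval a * b ^ 2)) δ1 δ2 := by
  have hsum : (fun i => Pt i / Aval a + b ^ 2 * ((Aval a - 1) * Pt i / (Aval a * b ^ 2))) = Pt :=
    funext fun i => split_add a hb (Pt i)
  exact ⟨_, _, inD2_of_inT_add (fun i hi => split_nonneg (hPt.1 i hi)) (by rwa [hsum])⟩

end Throughput

theorem stmt_6_general (K : ℕ) (l E1 E2 : ℕ → ℝ) (N0 a b : ℝ)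
    (hl : ∀ i ∈ Finset.range (K + 1), 0 < l i)
    (hb : b ≠ 0) :
    sSup {y : ℝ | ∃ P1 P2 δ1 δ2 : ℕ → ℝ, InD2 K l E1 E2 b P1 P2 δ1 δ2 ∧
        y = Fthr K l N0 a b P1 P2} =
      sSup {y : ℝ | ∃ Pt : ℕ → ℝ, InT K l (fun i => E1 i + b ^ 2 * E2 i) Pt ∧
        y = ∑ i ∈ Finset.range (K + 1), Cfun (Pt i / N0) * l i} ∧
    (∀ Pts : ℕ → ℝ,
      IsGreatest {y : ℝ | ∃ Pt : ℕ → ℝ, InT K l (fun i => E1 i + b ^ 2 * E2 i) Pt ∧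
          y = ∑ i ∈ Finset.range (K + 1), Cfun (Pt i / N0) * l i}
        (∑ i ∈ Finset.range (K + 1), Cfun (Pts i / N0) * l i) →
      InT K l (fun i => E1 i + b ^ 2 * E2 i) Pts →
      ∃ δ1 δ2 : ℕ → ℝ,
        (∀ i ∈ Finset.range (K + 1), 0 ≤ δ1 i ∧ 0 ≤ δ2 i ∧ δ1 i * δ2 i = 0) ∧
        InD2 K l E1 E2 b (fun i => Pts i / Aval a)
          (fun i => (Aval a - 1) * Pts i / (Aval a * b ^ 2)) δ1 δ2 ∧
        Fthr K l N0 a b (fun i => Pts i / Aval a)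
            (fun i => (Aval a - 1) * Pts i / (Aval a * b ^ 2)) =
          sSup {y : ℝ | ∃ Pt : ℕ → ℝ, InT K l (fun i => E1 i + b ^ 2 * E2 i) Pt ∧
            y = ∑ i ∈ Finset.range (K + 1), Cfun (Pt i / N0) * l i}) := by
  refine ⟨csSup_eq_csSup_of_forall_exists_le ?_ ?_, fun Pts hG hPts => ?_⟩
  · rintro _ ⟨P1, P2, δ1, δ2, hD2, rfl⟩
    exact ⟨_, ⟨_, hD2.inT_add, rfl⟩, Fthr_le_sum_cfun_add fun i hi => (hl i hi).le⟩
  · rintro _ ⟨Pt, hPt, rfl⟩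
    obtain ⟨δ1, δ2, hD2⟩ := inD2_split (a := a) hb hPt
    exact ⟨_, ⟨_, _, δ1, δ2, hD2, rfl⟩, (Fthr_split hb Pt).ge⟩
  · obtain ⟨δ1, δ2, hD2⟩ := inD2_split (a := a) hb hPts
    exact ⟨δ1, δ2, hD2.2.1, hD2, (Fthr_split hb Pts).trans hG.csSup_eq.symm⟩

/-- Theorem 1: the two-way ET problem has the same optimal value as the
single-user total-energy problem, and any maximizer `P̃ₜ*` of the latter yields, via
`P₁*ⁱ = P̃ₜ*ⁱ/A` and `P₂*ⁱ = (A−1)P̃ₜ*ⁱ/(A·b²)`, an optimal feasible point of the former. -/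
theorem stmt_6 (K : ℕ) (l E1 E2 : ℕ → ℝ) (N0 a b : ℝ)
    (hl : ∀ i ∈ Finset.range (K + 1), 0 < l i)
    (hE1 : ∀ i ∈ Finset.range (K + 1), 0 ≤ E1 i)
    (hE2 : ∀ i ∈ Finset.range (K + 1), 0 ≤ E2 i)
    (hN0 : 0 < N0) (hb : b ≠ 0) :
    sSup {y : ℝ | ∃ P1 P2 δ1 δ2 : ℕ → ℝ, InD2 K l E1 E2 b P1 P2 δ1 δ2 ∧
        y = Fthr K l N0 a b P1 P2} =
      sSup {y : ℝ | ∃ Pt : ℕ → ℝ, InT K l (fun i => E1 i + b ^ 2 * E2 i) Pt ∧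
        y = ∑ i ∈ Finset.range (K + 1), Cfun (Pt i / N0) * l i} ∧
    (∀ Pts : ℕ → ℝ,
      IsGreatest {y : ℝ | ∃ Pt : ℕ → ℝ, InT K l (fun i => E1 i + b ^ 2 * E2 i) Pt ∧
          y = ∑ i ∈ Finset.range (K + 1), Cfun (Pt i / N0) * l i}
        (∑ i ∈ Finset.range (K + 1), Cfun (Pts i / N0) * l i) →
      InT K l (fun i => E1 i + b ^ 2 * E2 i) Pts →
      ∃ δ1 δ2 : ℕ → ℝ,
        (∀ i ∈ Finset.range (K + 1), 0 ≤ δ1 i ∧ 0 ≤ δ2 i ∧ δ1 i * δ2 i = 0) ∧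
        InD2 K l E1 E2 b (fun i => Pts i / Aval a)
          (fun i => (Aval a - 1) * Pts i / (Aval a * b ^ 2)) δ1 δ2 ∧
        Fthr K l N0 a b (fun i => Pts i / Aval a)
            (fun i => (Aval a - 1) * Pts i / (Aval a * b ^ 2)) =
          sSup {y : ℝ | ∃ Pt : ℕ → ℝ, InT K l (fun i => E1 i + b ^ 2 * E2 i) Pt ∧
            y = ∑ i ∈ Finset.range (K + 1), Cfun (Pt i / N0) * l i}) :=
  stmt_6_general K l E1 E2 N0 a b hl hb
end

section
/- Consider the reformulated one-way ET problem: maximize F(P_1, P_2) over all (P_1, P_2, δ) with P_1^i, P_2^i ≥ 0 (i = 1,…,K+1), δ^i ≥ 0 (i = 0,…,K), ∑_{i=1}^k P_1^i l^i ≤ ∑_{i=0}^{k-1}(E_1^i − δ^i) for all k, and ∑_{i=1}^k (P_1^i + b²P_2^i) l^i ≤ ∑_{i=0}^{k-1} Ẽ_t^i for all k. Suppose P̃_t* maximizes ∑_{i=1}^{K+1} C(P̃_t^i/N_0)·l^i over T, and suppose there exists δ* ≥ 0 (componentwise) such that ∑_{i=1}^k (P̃_t*^i/A)·l^i ≤ ∑_{i=0}^{k-1}(E_1^i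 − δ*^i) for all k = 1,…,K+1. Then the triple with P_1*^i := P̃_t*^i/A, P_2*^i := (A−1)·P̃_t*^i/(A·b²), and δ* is feasible and optimal for the reformulated one-way ET problem, and the optimal value equals sup_{P̃_t ∈ T} ∑_{i=1}^{K+1} C(P̃_t^i/N_0)·l^i. -/
/-- Feasible set of the reformulated one-way ET problem: nonnegative powers, nonnegative
S→R transfers, source energy causality with transfers, and total energy causality. -/
def Feas1 (K : ℕ) (l E1 E2 : ℕ → ℝ) (b : ℝ) (P1 P2 δ : ℕ → ℝ) : Prop :=
  (∀ i ∈ Finset.range (K + 1), 0 ≤ P1 i ∧ 0 ≤ P2 i) ∧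
  (∀ i ∈ Finset.range (K + 1), 0 ≤ δ i) ∧
  (∀ k, 1 ≤ k → k ≤ K + 1 →
    ∑ i ∈ Finset.range k, P1 i * l i ≤ ∑ i ∈ Finset.range k, (E1 i - δ i)) ∧
  (∀ k, 1 ≤ k → k ≤ K + 1 →
    ∑ i ∈ Finset.range k, (P1 i + b ^ 2 * P2 i) * l i ≤
      ∑ i ∈ Finset.range k, (E1 i + b ^ 2 * E2 i))

/-- Lemma 5: if `P̃ₜ*` maximizes the single-user total-energy problem and
the source is in good EH condition (there is `δ* ≥ 0` making `P̃ₜ*/A` source-feasible),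
then `P₁*ⁱ = P̃ₜ*ⁱ/A`, `P₂*ⁱ = (A−1)P̃ₜ*ⁱ/(A·b²)` together with `δ*` are feasible and
optimal for the reformulated one-way ET problem, whose value is the total-energy optimum. -/
theorem stmt_7 (K : ℕ) (l E1 E2 : ℕ → ℝ) (N0 a b : ℝ)
    (hl : ∀ i ∈ Finset.range (K + 1), 0 < l i)
    (hE1 : ∀ i ∈ Finset.range (K + 1), 0 ≤ E1 i)
    (hE2 : ∀ i ∈ Finset.range (K + 1), 0 ≤ E2 i)
    (hN0 : 0 < N0) (hb : b ≠ 0)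
    (Pts δs : ℕ → ℝ)
    (hPtfeas : InT K l (fun i => E1 i + b ^ 2 * E2 i) Pts)
    (hPtopt : ∀ Qt : ℕ → ℝ, InT K l (fun i => E1 i + b ^ 2 * E2 i) Qt →
      ∑ i ∈ Finset.range (K + 1), Cfun (Qt i / N0) * l i ≤
        ∑ i ∈ Finset.range (K + 1), Cfun (Pts i / N0) * l i)
    (hδ : ∀ i ∈ Finset.range (K + 1), 0 ≤ δs i)
    (hgood : ∀ k, 1 ≤ k → k ≤ K + 1 →
      ∑ i ∈ Finset.range k, Pts i / Aval a * l i ≤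
        ∑ i ∈ Finset.range k, (E1 i - δs i)) :
    Feas1 K l E1 E2 b (fun i => Pts i / Aval a)
      (fun i => (Aval a - 1) * Pts i / (Aval a * b ^ 2)) δs ∧
    IsGreatest {y : ℝ | ∃ P1 P2 δ : ℕ → ℝ, Feas1 K l E1 E2 b P1 P2 δ ∧
        y = Fthr K l N0 a b P1 P2}
      (Fthr K l N0 a b (fun i => Pts i / Aval a)
        (fun i => (Aval a - 1) * Pts i / (Aval a * b ^ 2))) ∧
    Fthr K l N0 a b (fun i => Pts i / Aval a)
        (fun i => (Aval a - 1) * Pts i / (Aval a * b ^ 2)) =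
      sSup {y : ℝ | ∃ Qt : ℕ → ℝ, InT K l (fun i => E1 i + b ^ 2 * E2 i) Qt ∧
        y = ∑ i ∈ Finset.range (K + 1), Cfun (Qt i / N0) * l i} := by
  obtain ⟨hPt0, hPtc⟩ := hPtfeas
  have hA1 : (1:ℝ) ≤ Aval a := le_max_left _ _
  have hA0 : (0:ℝ) < Aval a := lt_of_lt_of_le one_pos hA1
  have hb2 : (0:ℝ) < b ^ 2 := by positivity
  have hkey : ∀ i : ℕ, Pts i / Aval a + b ^ 2 * ((Aval a - 1) * Pts i / (Aval a * b ^ 2)) = Pts i := by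
    intro i; field_simp; ring
  have hkey2 : ∀ i : ℕ, Aval a * (Pts i / Aval a) = Pts i := by
    intro i; field_simp
  have hFval : Fthr K l N0 a b (fun i => Pts i / Aval a)
      (fun i => (Aval a - 1) * Pts i / (Aval a * b ^ 2)) =
      ∑ i ∈ Finset.range (K + 1), Cfun (Pts i / N0) * l i := by
    unfold Fthr
    refine Finset.sum_congr rfl fun i hi => ?_
    simp only [hkey, hkey2, min_self]
  have hfeas : Feas1 K l E1 E2 b (fun i => Pts i / Aval a)
      (fun i => (Aval a - 1) * Pts i / (Aval a * b ^ 2)) δs := by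
    refine ⟨fun i hi => ⟨?_, ?_⟩, hδ, hgood, fun k hk1 hk2 => ?_⟩
    · exact div_nonneg (hPt0 i hi) hA0.le
    · exact div_nonneg (mul_nonneg (by linarith) (hPt0 i hi)) (by positivity)
    · calc ∑ i ∈ Finset.range k,
            (Pts i / Aval a + b ^ 2 * ((Aval a - 1) * Pts i / (Aval a * b ^ 2))) * l i
          = ∑ i ∈ Finset.range k, Pts i * l i := by
            exact Finset.sum_congr rfl fun i _ => by rw [hkey]
        _ ≤ _ := hPtc k hk1 hk2
  have hub : ∀ y ∈ {y : ℝ | ∃ P1 P2 δ : ℕ → ℝ, Feas1 K l E1 E2 b P1 P2 δ ∧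
      y = Fthr K l N0 a b P1 P2}, y ≤ ∑ i ∈ Finset.range (K + 1), Cfun (Pts i / N0) * l i := by
    rintro y ⟨P1, P2, δ, ⟨hpos, hδ', hsrc, htot⟩, rfl⟩
    have hQ : InT K l (fun i => E1 i + b ^ 2 * E2 i) (fun i => P1 i + b ^ 2 * P2 i) := by
      refine ⟨fun i hi => ?_, fun k hk1 hk2 => htot k hk1 hk2⟩
      exact add_nonneg (hpos i hi).1 (mul_nonneg hb2.le (hpos i hi).2)
    calc Fthr K l N0 a b P1 P2
        ≤ ∑ i ∈ Finset.range (K + 1), Cfun ((P1 i + b ^ 2 * P2 i) / N0) * l i := by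
          exact Finset.sum_le_sum fun i hi =>
            mul_le_mul_of_nonneg_right (min_le_left _ _) (hl i hi).le
      _ ≤ _ := hPtopt _ hQ
  have hG2 : IsGreatest {y : ℝ | ∃ Qt : ℕ → ℝ, InT K l (fun i => E1 i + b ^ 2 * E2 i) Qt ∧
      y = ∑ i ∈ Finset.range (K + 1), Cfun (Qt i / N0) * l i}
      (∑ i ∈ Finset.range (K + 1), Cfun (Pts i / N0) * l i) := by
    constructor
    · exact ⟨Pts, ⟨hPt0, hPtc⟩, rfl⟩
    · rintro y ⟨Qt, hQt, rfl⟩; exact hPtopt _ hQt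
  refine ⟨hfeas, ⟨⟨_, _, δs, hfeas, rfl⟩, ?_⟩, ?_⟩
  · rw [hFval]; exact hub
  · rw [hFval, hG2.csSup_eq]
end

section
/- Consider maximizing G(P_1, P_2) := ∑_{i=1}^{K+1} C((P_1^i + b²P_2^i)/N_0)·l^i over all (P_1, P_2, δ) with P_1^i, P_2^i ≥ 0 (i = 1,…,K+1), δ^i ≥ 0 (i = 0,…,K), and the one-way ET causality constraints ∑_{i=1}^k P_1^i l^i ≤ ∑_{i=0}^{k-1}(E_1^i − δ^i) and ∑_{i=1}^k b²P_2^i l^i ≤ ∑_{i=0}^{k-1}(b²E_2^i + δ^i) for all k = 1,…,K+1. Then every maximizer (P_1, P_2, δ) satisfies ∑_{i=1}^{K+1} P_1^i l^i = ∑_{i=0}^{K}(E_1^i − δ^i) and ∑_{i=1}^{K+1} P_2^i l^i = ∑_{i=0}^{K}(E_2^i + δ^i/b²); i.e., the source completely uses up its harvested energy (for transmission or transfer) and the relay uses up its harvested plus received energy by the deadline. -/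
/-- One-way ET feasible set: nonnegative powers and S→R transfers, with energy causality
at the source (harvested minus transferred) and the relay (harvested plus received). -/
def FeasOW (K : ℕ) (l E1 E2 : ℕ → ℝ) (b : ℝ) (P1 P2 δ : ℕ → ℝ) : Prop :=
  (∀ i ∈ Finset.range (K + 1), 0 ≤ P1 i ∧ 0 ≤ P2 i) ∧
  (∀ i ∈ Finset.range (K + 1), 0 ≤ δ i) ∧
  (∀ k, 1 ≤ k → k ≤ K + 1 →
    ∑ i ∈ Finset.range k, P1 i * l i ≤ ∑ i ∈ Finset.range k, (E1 i - δ i)) ∧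
  (∀ k, 1 ≤ k → k ≤ K + 1 →
    ∑ i ∈ Finset.range k, b ^ 2 * P2 i * l i ≤
      ∑ i ∈ Finset.range k, (b ^ 2 * E2 i + δ i))

/-- The multiple-access rate objective `G(P₁,P₂) = ∑ C((P₁ⁱ+b²P₂ⁱ)/N₀)·lⁱ`. -/
noncomputable def Gmac (K : ℕ) (l : ℕ → ℝ) (N0 b : ℝ) (P1 P2 : ℕ → ℝ) : ℝ :=
  ∑ i ∈ Finset.range (K + 1), Cfun ((P1 i + b ^ 2 * P2 i) / N0) * l i

/-!
Any energy left unused at the deadline can be spent in the last epoch: raising the power of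
the last epoch by the leftover energy divided by its length changes no causality constraint
except the last one, which it makes tight, and it strictly increases the rate of that epoch
because `C` is strictly increasing. So a maximizer has no leftover energy, at the source or at
the relay.
-/

open Finset Function

lemma Cfun_lt_Cfun {x y : ℝ} (hx : 0 ≤ x) (hxy : x < y) : Cfun x < Cfun y :=
  Real.logb_lt_logb one_lt_two (by linarith) (by linarith)

lemma Cfun_div_mul_lt_Cfun_div_mul {a a' N0 t : ℝ} (ha : 0 ≤ a) (haa' : a < a') (hN0 : 0 < N0)
    (ht : 0 < t) : Cfun (a / N0) * t < Cfun (a' / N0) * t :=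
  mul_lt_mul_of_pos_right
    (Cfun_lt_Cfun (div_nonneg ha hN0.le) (div_lt_div_of_pos_right haa' hN0)) ht

lemma sum_range_succ_lt_of_lt_last {K : ℕ} {x y : ℕ → ℝ} (hxy : ∀ i < K, x i = y i)
    (hK : x K < y K) : ∑ i ∈ range (K + 1), x i < ∑ i ∈ range (K + 1), y i := by
  rw [sum_range_succ, sum_range_succ, sum_congr rfl fun i hi => hxy i (mem_range.mp hi)]
  exact add_lt_add_right hK _

lemma cumulative_le_of_eq_below_last {K : ℕ} {x y e : ℕ → ℝ}
    (hx : ∀ k, 1 ≤ k → k ≤ K + 1 → ∑ i ∈ range k, x i ≤ ∑ i ∈ range k, e i)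
    (hxy : ∀ i < K, y i = x i) (hy : ∑ i ∈ range K, x i + y K ≤ ∑ i ∈ range (K + 1), e i) :
    ∀ k, 1 ≤ k → k ≤ K + 1 → ∑ i ∈ range k, y i ≤ ∑ i ∈ range k, e i := by
  have hbelow : ∀ k ≤ K, ∑ i ∈ range k, y i = ∑ i ∈ range k, x i := fun k hk =>
    sum_congr rfl fun i hi => hxy i (by rw [mem_range] at hi; omega)
  intro k hk1 hk
  rcases hk.lt_or_eq with hk | rfl
  · rw [hbelow k (by omega)]
    exact hx k hk1 hk.le
  · rwa [sum_range_succ, hbelow K le_rfl]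

section Exhaustion

variable {K : ℕ} {l E1 E2 : ℕ → ℝ} {N0 b : ℝ} {P1 P2 δ : ℕ → ℝ}

lemma FeasOW.source_exhausted (hlK : 0 < l K) (hN0 : 0 < N0)
    (hfeas : FeasOW K l E1 E2 b P1 P2 δ)
    (hopt : ∀ Q1 Q2, FeasOW K l E1 E2 b Q1 Q2 δ → Gmac K l N0 b Q1 Q2 ≤ Gmac K l N0 b P1 P2) :
    ∑ i ∈ range (K + 1), P1 i * l i = ∑ i ∈ range (K + 1), (E1 i - δ i) := by
  obtain ⟨hP, hδ, hsrc, hrel⟩ := hfeas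
  refine (hsrc (K + 1) (by omega) le_rfl).antisymm (not_lt.mp fun hslack => ?_)
  set s := ∑ i ∈ range (K + 1), (E1 i - δ i) - ∑ i ∈ range (K + 1), P1 i * l i with hs_def
  have hs : 0 < s / l K := div_pos (sub_pos.mpr hslack) hlK
  set Q1 := update P1 K (P1 K + s / l K)
  have hQ1K : Q1 K = P1 K + s / l K := update_self _ _ _
  have hQ1 : ∀ i ≠ K, Q1 i = P1 i := fun i hi => update_of_ne hi _ _
  obtain ⟨hP1K, hP2K⟩ := hP K (self_mem_range_succ K)
  have hfeasQ : FeasOW K l E1 E2 b Q1 P2 δ := by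
    refine ⟨fun i hi => ⟨?_, (hP i hi).2⟩, hδ,
      cumulative_le_of_eq_below_last hsrc (fun i hi => by rw [hQ1 i hi.ne]) ?_, hrel⟩
    · rcases eq_or_ne i K with rfl | hiK
      · rw [hQ1K]; linarith
      · rw [hQ1 i hiK]; exact (hP i hi).1
    · rw [hQ1K, add_mul, div_mul_cancel₀ _ hlK.ne']
      linarith [sum_range_succ (fun i => P1 i * l i) K]
  have hgain : Gmac K l N0 b P1 P2 < Gmac K l N0 b Q1 P2 :=
    sum_range_succ_lt_of_lt_last (fun i hi => by rw [hQ1 i hi.ne]) <| by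
      rw [hQ1K]
      exact Cfun_div_mul_lt_Cfun_div_mul (by positivity) (by linarith) hN0 hlK
  exact (hopt Q1 P2 hfeasQ).not_gt hgain

lemma FeasOW.relay_exhausted (hlK : 0 < l K) (hN0 : 0 < N0) (hb : b ≠ 0)
    (hfeas : FeasOW K l E1 E2 b P1 P2 δ)
    (hopt : ∀ Q1 Q2, FeasOW K l E1 E2 b Q1 Q2 δ → Gmac K l N0 b Q1 Q2 ≤ Gmac K l N0 b P1 P2) :
    ∑ i ∈ range (K + 1), b ^ 2 * P2 i * l i = ∑ i ∈ range (K + 1), (b ^ 2 * E2 i + δ i) := by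
  obtain ⟨hP, hδ, hsrc, hrel⟩ := hfeas
  refine (hrel (K + 1) (by omega) le_rfl).antisymm (not_lt.mp fun hslack => ?_)
  set s := ∑ i ∈ range (K + 1), (b ^ 2 * E2 i + δ i) - ∑ i ∈ range (K + 1), b ^ 2 * P2 i * l i
    with hs_def
  have hbl : 0 < b ^ 2 * l K := by positivity
  have hs : 0 < s / (b ^ 2 * l K) := div_pos (sub_pos.mpr hslack) hbl
  set Q2 := update P2 K (P2 K + s / (b ^ 2 * l K))
  have hQ2K : Q2 K = P2 K + s / (b ^ 2 * l K) := update_self _ _ _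
  have hQ2 : ∀ i ≠ K, Q2 i = P2 i := fun i hi => update_of_ne hi _ _
  obtain ⟨hP1K, hP2K⟩ := hP K (self_mem_range_succ K)
  have hfeasQ : FeasOW K l E1 E2 b P1 Q2 δ := by
    refine ⟨fun i hi => ⟨(hP i hi).1, ?_⟩, hδ, hsrc,
      cumulative_le_of_eq_below_last hrel (fun i hi => by rw [hQ2 i hi.ne]) ?_⟩
    · rcases eq_or_ne i K with rfl | hiK
      · rw [hQ2K]; linarith
      · rw [hQ2 i hiK]; exact (hP i hi).2
    · have hlast : b ^ 2 * Q2 K * l K = b ^ 2 * P2 K * l K + s := by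
        rw [hQ2K]; field_simp
      rw [hlast]
      linarith [sum_range_succ (fun i => b ^ 2 * P2 i * l i) K]
  have hgain : Gmac K l N0 b P1 P2 < Gmac K l N0 b P1 Q2 :=
    sum_range_succ_lt_of_lt_last (fun i hi => by rw [hQ2 i hi.ne]) <| by
      rw [hQ2K]
      exact Cfun_div_mul_lt_Cfun_div_mul (by positivity)
        (by gcongr; linarith) hN0 hlK
  exact (hopt P1 Q2 hfeasQ).not_gt hgain

end Exhaustion

theorem stmt_8_general (K : ℕ) (l E1 E2 : ℕ → ℝ) (N0 b : ℝ)
    (hl : ∀ i ∈ Finset.range (K + 1), 0 < l i)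
    (hN0 : 0 < N0) (hb : b ≠ 0)
    (P1 P2 δ : ℕ → ℝ)
    (hfeas : FeasOW K l E1 E2 b P1 P2 δ)
    (hopt : ∀ Q1 Q2 dq : ℕ → ℝ, FeasOW K l E1 E2 b Q1 Q2 dq →
      Gmac K l N0 b Q1 Q2 ≤ Gmac K l N0 b P1 P2) :
    ∑ i ∈ Finset.range (K + 1), P1 i * l i =
      ∑ i ∈ Finset.range (K + 1), (E1 i - δ i) ∧
    ∑ i ∈ Finset.range (K + 1), P2 i * l i =
      ∑ i ∈ Finset.range (K + 1), (E2 i + δ i / b ^ 2) := by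
  have hlK := hl K (self_mem_range_succ K)
  have hopt' := fun Q1 Q2 => hopt Q1 Q2 δ
  refine ⟨hfeas.source_exhausted hlK hN0 hopt', ?_⟩
  have hb2 : b ^ 2 ≠ 0 := pow_ne_zero 2 hb
  calc ∑ i ∈ range (K + 1), P2 i * l i
      = (∑ i ∈ range (K + 1), b ^ 2 * P2 i * l i) / b ^ 2 := by
        rw [sum_div]; refine sum_congr rfl fun i _ => by field_simp
    _ = (∑ i ∈ range (K + 1), (b ^ 2 * E2 i + δ i)) / b ^ 2 := by
        rw [hfeas.relay_exhausted hlK hN0 hb hopt']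
    _ = ∑ i ∈ range (K + 1), (E2 i + δ i / b ^ 2) := by
        rw [sum_div]; refine sum_congr rfl fun i _ => by field_simp

/-- Lemma 6: every maximizer of the MAC objective over the one-way ET
feasible set exhausts the source energy (transmission plus transfer) and the relay
energy (harvested plus received) by the deadline. -/
theorem stmt_8 (K : ℕ) (l E1 E2 : ℕ → ℝ) (N0 b : ℝ)
    (hl : ∀ i ∈ Finset.range (K + 1), 0 < l i)
    (hE1 : ∀ i ∈ Finset.range (K + 1), 0 ≤ E1 i)
    (hE2 : ∀ i ∈ Finset.range (K + 1), 0 ≤ E2 i)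
    (hN0 : 0 < N0) (hb : b ≠ 0)
    (P1 P2 δ : ℕ → ℝ)
    (hfeas : FeasOW K l E1 E2 b P1 P2 δ)
    (hopt : ∀ Q1 Q2 dq : ℕ → ℝ, FeasOW K l E1 E2 b Q1 Q2 dq →
      Gmac K l N0 b Q1 Q2 ≤ Gmac K l N0 b P1 P2) :
    ∑ i ∈ Finset.range (K + 1), P1 i * l i =
      ∑ i ∈ Finset.range (K + 1), (E1 i - δ i) ∧
    ∑ i ∈ Finset.range (K + 1), P2 i * l i =
      ∑ i ∈ Finset.range (K + 1), (E2 i + δ i / b ^ 2) :=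
  stmt_8_general K l E1 E2 N0 b hl hN0 hb P1 P2 δ hfeas hopt
end

section
/- Suppose P̃_t* ∈ T maximizes ∑_{i=1}^{K+1} φ(P̃_t^i)·l^i over T for every nondecreasing concave function φ : [0,∞) → ℝ (as the shortest-path allocation does). Set P_1*^i := P̃_t*^i/A and P_2*^i := (A−1)·P̃_t*^i/(A·b²). Then there exist δ_1*^i, δ_2*^i ≥ 0 with δ_1*^i·δ_2*^i = 0 for all i = 0,…,K such that the modified energy patterns 𝔈_1^i := E_1^i − δ_1*^i + δ_2*^i and 𝔈_2^i := E_2^i + (δ_1*^i − δ_2*^i)/b² satisfy 𝔈_1^i = Ẽ_t^i/A and 𝔈_2^i = (A−1)·Ẽ_t^i/(A·b²) for all i; moreover P_1* maximizes ∑_{i=1}^{K+1} C(A·P_1^i/N_0)·l^i over { P_1 : P_1^i ≥ 0, ∑_{i=1}^k P_1^i l^i ≤ ∑_{i=0}^{k-1} 𝔈_1^i for all k }, and P_2* maximizes ∑_{i=1}^{K+1} C(P_2^i/N_0)·l^i over { P_2 : P_2^i ≥ 0, ∑_{i=1}^k P_2^i l^i ≤ ∑_{i=0}^{k-1} 𝔈_2^i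 for all k }. Hence the optimal two-way ET solution is equivalent to disjoint single-user optimization for S and R with the modified EH patterns 𝔈_1 and 𝔈_2. -/
theorem posPart_mul_negPart_eq_zero {α : Type*} [Ring α] [LinearOrder α] [IsOrderedRing α]
    (a : α) : a⁺ * a⁻ = 0 := by
  rcases le_total 0 a with h | h
  · rw [negPart_eq_zero.2 h, mul_zero]
  · rw [posPart_eq_zero.2 h, zero_mul]

theorem monotoneOn_Cfun : MonotoneOn Cfun (Set.Ici 0) := fun x hx _ _ hxy =>
  Real.logb_le_logb_of_le one_lt_two (by linarith [Set.mem_Ici.1 hx]) (by linarith)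

theorem concaveOn_Cfun : ConcaveOn ℝ (Set.Ici 0) Cfun := by
  have hlog := (strictConcaveOn_log_Ioi.concaveOn.translate_right 1).smul
    (inv_nonneg.2 (Real.log_nonneg one_le_two))
  refine (hlog.subset (fun x hx => ?_) (convex_Ici 0)).congr fun x _ => ?_
  · simp only [Set.mem_preimage, Set.mem_Ioi]
    linarith [Set.mem_Ici.1 hx]
  · simp [Cfun, Real.logb, div_eq_inv_mul]

def IsUniversallyOptimal (K : ℕ) (l Et P : ℕ → ℝ) : Prop :=
  ∀ φ : ℝ → ℝ, MonotoneOn φ (Set.Ici 0) → ConcaveOn ℝ (Set.Ici 0) φ →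
    ∀ Q : ℕ → ℝ, InT K l Et Q →
      ∑ i ∈ Finset.range (K + 1), φ (Q i) * l i ≤ ∑ i ∈ Finset.range (K + 1), φ (P i) * l i

section ConstMul

variable {K : ℕ} {l Et P : ℕ → ℝ} {ψ f : ℝ → ℝ} {c : ℝ}

-- Scalings are passed as `f` with `hf : ∀ x, f x = c * x`, so that they can keep the shape in
-- which the statement writes them, such as `x / A`.

theorem MonotoneOn.comp_const_mul_Ici (hψ : MonotoneOn ψ (Set.Ici 0)) (hc : 0 ≤ c)
    (hf : ∀ x, f x = c * x) : MonotoneOn (ψ ∘ f) (Set.Ici 0) := by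
  refine hψ.comp (fun x _ y _ hxy => ?_) fun x hx => ?_
  · rw [hf, hf]
    exact mul_le_mul_of_nonneg_left hxy hc
  · rw [hf]
    exact mul_nonneg hc hx

theorem ConcaveOn.comp_const_mul_Ici (hψ : ConcaveOn ℝ (Set.Ici 0) ψ) (hc : 0 ≤ c)
    (hf : ∀ x, f x = c * x) : ConcaveOn ℝ (Set.Ici 0) (ψ ∘ f) := by
  obtain rfl : f = LinearMap.lsmul ℝ ℝ c := funext fun x => (hf x).trans (smul_eq_mul c x).symm
  exact (hψ.comp_linearMap _).subset (fun x hx => mul_nonneg hc hx) (convex_Ici 0)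

theorem InT.map_const_mul (hc : 0 ≤ c) (hf : ∀ x, f x = c * x) (h : InT K l Et P) :
    InT K l (f ∘ Et) (f ∘ P) := by
  refine ⟨fun i hi => ?_, fun k hk₁ hk₂ => ?_⟩
  · simp only [Function.comp_apply, hf]
    exact mul_nonneg hc (h.1 i hi)
  · simp only [Function.comp_apply, hf, mul_assoc, ← Finset.mul_sum]
    exact mul_le_mul_of_nonneg_left (h.2 k hk₁ hk₂) hc

theorem InT.eq_zero_of_budget_zero (hl : ∀ i ∈ Finset.range (K + 1), 0 < l i)
    (h : InT K l 0 P) : ∀ i ∈ Finset.range (K + 1), P i = 0 := by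
  have hterm : ∀ i ∈ Finset.range (K + 1), 0 ≤ P i * l i :=
    fun i hi => mul_nonneg (h.1 i hi) (hl i hi).le
  have hsum : ∑ i ∈ Finset.range (K + 1), P i * l i ≤ 0 := by
    simpa using h.2 (K + 1) (Nat.le_add_left 1 K) le_rfl
  intro i hi
  have := (Finset.sum_eq_zero_iff_of_nonneg hterm).1
    (le_antisymm hsum (Finset.sum_nonneg hterm)) i hi
  exact (mul_eq_zero.1 this).resolve_right (hl i hi).ne'

theorem IsUniversallyOptimal.map_const_mul (hl : ∀ i ∈ Finset.range (K + 1), 0 < l i)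
    (hc : 0 ≤ c) (hf : ∀ x, f x = c * x) (hopt : IsUniversallyOptimal K l Et P) :
    IsUniversallyOptimal K l (f ∘ Et) (f ∘ P) := by
  intro ψ hψm hψc Q hQ
  rcases hc.eq_or_lt with rfl | hc
  · have hf0 : f ∘ Et = 0 := funext fun i => by simp [hf]
    rw [hf0] at hQ
    refine (Finset.sum_congr rfl fun i hi => ?_).le
    rw [hQ.eq_zero_of_budget_zero hl i hi, Function.comp_apply, hf, zero_mul]
  · have hEt : (c⁻¹ * ·) ∘ f ∘ Et = Et :=
      funext fun i => by simp [hf, inv_mul_cancel_left₀ hc.ne']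
    have := hopt (ψ ∘ f) (hψm.comp_const_mul_Ici hc.le hf) (hψc.comp_const_mul_Ici hc.le hf)
      _ (hEt ▸ hQ.map_const_mul (inv_nonneg.2 hc.le) fun _ => rfl)
    simpa [hf, mul_inv_cancel_left₀ hc.ne'] using this

end ConstMul

theorem exists_transfer_eq_scaled_total (E1 E2 : ℕ → ℝ) {A b : ℝ} (hA : A ≠ 0) (hb : b ≠ 0) :
    ∃ δ1 δ2 : ℕ → ℝ, ∀ i, (0 ≤ δ1 i ∧ 0 ≤ δ2 i ∧ δ1 i * δ2 i = 0) ∧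
      (E1 i - δ1 i + δ2 i = (E1 i + b ^ 2 * E2 i) / A ∧
        E2 i + (δ1 i - δ2 i) / b ^ 2 = (A - 1) * (E1 i + b ^ 2 * E2 i) / (A * b ^ 2)) := by
  refine ⟨fun i => (E1 i - (E1 i + b ^ 2 * E2 i) / A)⁺,
    fun i => (E1 i - (E1 i + b ^ 2 * E2 i) / A)⁻, fun i =>
      ⟨⟨posPart_nonneg _, negPart_nonneg _, posPart_mul_negPart_eq_zero _⟩, ?_, ?_⟩⟩
  · rw [sub_add, posPart_sub_negPart, sub_sub_cancel]
  · rw [posPart_sub_negPart]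
    field_simp
    ring

theorem stmt_12_general (K : ℕ) (l E1 E2 : ℕ → ℝ) (N0 a b : ℝ)
    (hl : ∀ i ∈ Finset.range (K + 1), 0 < l i)
    (hN0 : 0 < N0) (hb : b ≠ 0)
    (Pts : ℕ → ℝ)
    (hPtfeas : InT K l (fun i => E1 i + b ^ 2 * E2 i) Pts)
    (hPtopt : ∀ φ : ℝ → ℝ, MonotoneOn φ (Set.Ici 0) → ConcaveOn ℝ (Set.Ici 0) φ →
      ∀ Qt : ℕ → ℝ, InT K l (fun i => E1 i + b ^ 2 * E2 i) Qt →
        ∑ i ∈ Finset.range (K + 1), φ (Qt i) * l i ≤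
          ∑ i ∈ Finset.range (K + 1), φ (Pts i) * l i) :
    ∃ δ1 δ2 : ℕ → ℝ,
      (∀ i ∈ Finset.range (K + 1), 0 ≤ δ1 i ∧ 0 ≤ δ2 i ∧ δ1 i * δ2 i = 0) ∧
      (∀ i ∈ Finset.range (K + 1),
        E1 i - δ1 i + δ2 i = (E1 i + b ^ 2 * E2 i) / Aval a ∧
        E2 i + (δ1 i - δ2 i) / b ^ 2 =
          (Aval a - 1) * (E1 i + b ^ 2 * E2 i) / (Aval a * b ^ 2)) ∧
      ((∀ i ∈ Finset.range (K + 1), 0 ≤ Pts i / Aval a) ∧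
        (∀ k, 1 ≤ k → k ≤ K + 1 →
          ∑ i ∈ Finset.range k, Pts i / Aval a * l i ≤
            ∑ i ∈ Finset.range k, (E1 i - δ1 i + δ2 i)) ∧
        (∀ Q1 : ℕ → ℝ, (∀ i ∈ Finset.range (K + 1), 0 ≤ Q1 i) →
          (∀ k, 1 ≤ k → k ≤ K + 1 →
            ∑ i ∈ Finset.range k, Q1 i * l i ≤
              ∑ i ∈ Finset.range k, (E1 i - δ1 i + δ2 i)) →
          ∑ i ∈ Finset.range (K + 1), Cfun (Aval a * Q1 i / N0) * l i ≤
            ∑ i ∈ Finset.range (K + 1),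
              Cfun (Aval a * (Pts i / Aval a) / N0) * l i)) ∧
      ((∀ i ∈ Finset.range (K + 1),
          0 ≤ (Aval a - 1) * Pts i / (Aval a * b ^ 2)) ∧
        (∀ k, 1 ≤ k → k ≤ K + 1 →
          ∑ i ∈ Finset.range k, (Aval a - 1) * Pts i / (Aval a * b ^ 2) * l i ≤
            ∑ i ∈ Finset.range k, (E2 i + (δ1 i - δ2 i) / b ^ 2)) ∧
        (∀ Q2 : ℕ → ℝ, (∀ i ∈ Finset.range (K + 1), 0 ≤ Q2 i) →
          (∀ k, 1 ≤ k → k ≤ K + 1 →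
            ∑ i ∈ Finset.range k, Q2 i * l i ≤
              ∑ i ∈ Finset.range k, (E2 i + (δ1 i - δ2 i) / b ^ 2)) →
          ∑ i ∈ Finset.range (K + 1), Cfun (Q2 i / N0) * l i ≤
            ∑ i ∈ Finset.range (K + 1),
              Cfun ((Aval a - 1) * Pts i / (Aval a * b ^ 2) / N0) * l i)) := by
  have hA : 1 ≤ Aval a := le_max_left _ _
  have hA₀ : 0 < Aval a := by linarith
  have hopt : IsUniversallyOptimal K l (fun i => E1 i + b ^ 2 * E2 i) Pts := hPtopt
  have hfS : ∀ x, x / Aval a = (Aval a)⁻¹ * x := fun x => div_eq_inv_mul x _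
  have hfR : ∀ x, (Aval a - 1) * x / (Aval a * b ^ 2) = (Aval a - 1) / (Aval a * b ^ 2) * x :=
    fun x => by ring
  have hcR : 0 ≤ (Aval a - 1) / (Aval a * b ^ 2) := div_nonneg (by linarith) (by positivity)
  obtain ⟨δ1, δ2, hδ⟩ := exists_transfer_eq_scaled_total E1 E2 hA₀.ne' hb
  have hS : (fun i => E1 i - δ1 i + δ2 i) = (· / Aval a) ∘ fun i => E1 i + b ^ 2 * E2 i :=
    funext fun i => (hδ i).2.1
  have hR : (fun i => E2 i + (δ1 i - δ2 i) / b ^ 2) =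
      ((Aval a - 1) * · / (Aval a * b ^ 2)) ∘ fun i => E1 i + b ^ 2 * E2 i :=
    funext fun i => (hδ i).2.2
  refine ⟨δ1, δ2, fun i _ => (hδ i).1, fun i _ => (hδ i).2, ?_, ?_⟩
  · rw [hS]
    obtain ⟨hnonneg, hcausal⟩ := hPtfeas.map_const_mul (inv_nonneg.2 hA₀.le) hfS
    have hrate : ∀ x, Aval a * x / N0 = Aval a / N0 * x := fun x => mul_div_right_comm _ x _
    have hκ : 0 ≤ Aval a / N0 := div_nonneg hA₀.le hN0.le
    exact ⟨hnonneg, hcausal, fun Q1 hQ1 hQ1c => hopt.map_const_mul hl (inv_nonneg.2 hA₀.le) hfS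
      (Cfun ∘ (Aval a * · / N0)) (monotoneOn_Cfun.comp_const_mul_Ici hκ hrate)
      (concaveOn_Cfun.comp_const_mul_Ici hκ hrate) Q1 ⟨hQ1, hQ1c⟩⟩
  · rw [hR]
    obtain ⟨hnonneg, hcausal⟩ := hPtfeas.map_const_mul hcR hfR
    have hrate : ∀ x, x / N0 = N0⁻¹ * x := fun x => div_eq_inv_mul x _
    have hκ : 0 ≤ N0⁻¹ := inv_nonneg.2 hN0.le
    exact ⟨hnonneg, hcausal, fun Q2 hQ2 hQ2c => hopt.map_const_mul hl hcR hfR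
      (Cfun ∘ (· / N0)) (monotoneOn_Cfun.comp_const_mul_Ici hκ hrate)
      (concaveOn_Cfun.comp_const_mul_Ici hκ hrate) Q2 ⟨hQ2, hQ2c⟩⟩

/-- Lemma 8: if `P̃ₜ*` maximizes every nondecreasing-concave separable
objective over `T` (as the shortest-path allocation does), then setting
`P₁*ⁱ = P̃ₜ*ⁱ/A`, `P₂*ⁱ = (A−1)P̃ₜ*ⁱ/(A·b²)` there are half-duplex transfers
`δ₁*, δ₂* ≥ 0` whose modified EH patterns `𝔈₁ = E₁ − δ₁* + δ₂*` and
`𝔈₂ = E₂ + (δ₁* − δ₂*)/b²` satisfy `𝔈₁ⁱ = Ẽₜⁱ/A`, `𝔈₂ⁱ = (A−1)Ẽₜⁱ/(A·b²)`, and the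
two-way ET optimum is realized by disjoint single-user optimization of S and R with
these modified patterns. -/
theorem stmt_12 (K : ℕ) (l E1 E2 : ℕ → ℝ) (N0 a b : ℝ)
    (hl : ∀ i ∈ Finset.range (K + 1), 0 < l i)
    (hE1 : ∀ i ∈ Finset.range (K + 1), 0 ≤ E1 i)
    (hE2 : ∀ i ∈ Finset.range (K + 1), 0 ≤ E2 i)
    (hN0 : 0 < N0) (hb : b ≠ 0)
    (Pts : ℕ → ℝ)
    (hPtfeas : InT K l (fun i => E1 i + b ^ 2 * E2 i) Pts)
    (hPtopt : ∀ φ : ℝ → ℝ, MonotoneOn φ (Set.Ici 0) → ConcaveOn ℝ (Set.Ici 0) φ →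
      ∀ Qt : ℕ → ℝ, InT K l (fun i => E1 i + b ^ 2 * E2 i) Qt →
        ∑ i ∈ Finset.range (K + 1), φ (Qt i) * l i ≤
          ∑ i ∈ Finset.range (K + 1), φ (Pts i) * l i) :
    ∃ δ1 δ2 : ℕ → ℝ,
      (∀ i ∈ Finset.range (K + 1), 0 ≤ δ1 i ∧ 0 ≤ δ2 i ∧ δ1 i * δ2 i = 0) ∧
      (∀ i ∈ Finset.range (K + 1),
        E1 i - δ1 i + δ2 i = (E1 i + b ^ 2 * E2 i) / Aval a ∧
        E2 i + (δ1 i - δ2 i) / b ^ 2 =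
          (Aval a - 1) * (E1 i + b ^ 2 * E2 i) / (Aval a * b ^ 2)) ∧
      ((∀ i ∈ Finset.range (K + 1), 0 ≤ Pts i / Aval a) ∧
        (∀ k, 1 ≤ k → k ≤ K + 1 →
          ∑ i ∈ Finset.range k, Pts i / Aval a * l i ≤
            ∑ i ∈ Finset.range k, (E1 i - δ1 i + δ2 i)) ∧
        (∀ Q1 : ℕ → ℝ, (∀ i ∈ Finset.range (K + 1), 0 ≤ Q1 i) →
          (∀ k, 1 ≤ k → k ≤ K + 1 →
            ∑ i ∈ Finset.range k, Q1 i * l i ≤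
              ∑ i ∈ Finset.range k, (E1 i - δ1 i + δ2 i)) →
          ∑ i ∈ Finset.range (K + 1), Cfun (Aval a * Q1 i / N0) * l i ≤
            ∑ i ∈ Finset.range (K + 1),
              Cfun (Aval a * (Pts i / Aval a) / N0) * l i)) ∧
      ((∀ i ∈ Finset.range (K + 1),
          0 ≤ (Aval a - 1) * Pts i / (Aval a * b ^ 2)) ∧
        (∀ k, 1 ≤ k → k ≤ K + 1 →
          ∑ i ∈ Finset.range k, (Aval a - 1) * Pts i / (Aval a * b ^ 2) * l i ≤
            ∑ i ∈ Finset.range k, (E2 i + (δ1 i - δ2 i) / b ^ 2)) ∧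
        (∀ Q2 : ℕ → ℝ, (∀ i ∈ Finset.range (K + 1), 0 ≤ Q2 i) →
          (∀ k, 1 ≤ k → k ≤ K + 1 →
            ∑ i ∈ Finset.range k, Q2 i * l i ≤
              ∑ i ∈ Finset.range k, (E2 i + (δ1 i - δ2 i) / b ^ 2)) →
          ∑ i ∈ Finset.range (K + 1), Cfun (Q2 i / N0) * l i ≤
            ∑ i ∈ Finset.range (K + 1),
              Cfun ((Aval a - 1) * Pts i / (Aval a * b ^ 2) / N0) * l i)) :=
  stmt_12_general K l E1 E2 N0 a b hl hN0 hb Pts hPtfeas hPtopt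
end
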